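/- arXiv:1309.7621 — 2 statements merged into one kernel-verified Lean document; each statement's English description precedes it below -/
import Mathlib

section
/- For t ≥ 0 define σ²(t) = 2∫₀ᵗ∫₀ʷ e^{-(v²+w²)/2} v dv dw. Then σ²(t) = (√2 − 1)√π − 2√(2π) Ψ(t) + 2√π Ψ(√2 t), where Ψ(x) = ∫ₓ^∞ (1/√(2π)) e^{-y²/2} dy is the standard normal survival function. -/
/-!
The inner integrand `v ↦ e^{-(v²+w²)/2} v` has the primitive `-e^{-(v²+w²)/2}`, so the
inner integral is `e^{-w²/2} - e^{-(√2 w)²/2}`. Both terms are Gaussian integrals over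
`[0, t]`, the second one after the substitution `y = √2 w`, and
`∫₀ˣ e^{-y²/2} dy = √(2π) (1/2 - Ψ x)`.
-/

open Real MeasureTheory Set

lemma integral_exp_neg_sq_add_div_two_mul_self (a b c : ℝ) :
    ∫ v in a..b, exp (-(v ^ 2 + c) / 2) * v
      = exp (-(a ^ 2 + c) / 2) - exp (-(b ^ 2 + c) / 2) := by
  have hderiv : ∀ v : ℝ, HasDerivAt (fun v ↦ -exp (-(v ^ 2 + c) / 2))
      (exp (-(v ^ 2 + c) / 2) * v) v := fun v ↦
    ((((hasDerivAt_pow 2 v).add_const c).neg.div_const 2).exp).neg.congr_deriv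
      (by simp only [Pi.neg_apply]; ring)
  rw [intervalIntegral.integral_eq_sub_of_hasDerivAt (fun v _ ↦ hderiv v)
    (by apply Continuous.intervalIntegrable; fun_prop)]
  ring

lemma integral_exp_neg_sq_div_two_eq_sub_integral_Ioi {x : ℝ} (hx : 0 ≤ x) :
    ∫ y in (0 : ℝ)..x, exp (-y ^ 2 / 2)
      = √(2 * π) / 2 - ∫ y in Ioi x, exp (-y ^ 2 / 2) := by
  have hform : ∀ y : ℝ, -y ^ 2 / 2 = -(1 / 2) * y ^ 2 := fun y ↦ by ring
  have hint : Integrable (fun y : ℝ ↦ exp (-y ^ 2 / 2)) := by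
    simpa only [hform] using integrable_exp_neg_mul_sq (b := 1 / 2) (by norm_num)
  have hIoi : ∫ y in Ioi (0 : ℝ), exp (-y ^ 2 / 2) = √(2 * π) / 2 := by
    simp only [hform, integral_gaussian_Ioi, div_div_eq_mul_div, div_one, mul_comm π]
  rw [← hIoi, intervalIntegral.integral_of_le hx, ← Ioc_union_Ioi_eq_Ioi hx,
    setIntegral_union (Ioc_disjoint_Ioi le_rfl) measurableSet_Ioi hint.integrableOn
      hint.integrableOn]
  ring

/-- Example 3 (Brownian motion loss process, discount `δ(t) = t²/2`):
explicit formula for the variance `σ²(t) = 2∫₀ᵗ∫₀ʷ e^{-(v²+w²)/2} v dv dw`,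
where `Ψ` is the standard normal survival function. -/
theorem bm_variance_formula
    (Ψ : ℝ → ℝ)
    (hΨ : ∀ x, Ψ x = ∫ y in Set.Ioi x, (1 / Real.sqrt (2 * π)) * Real.exp (-y ^ 2 / 2))
    (t : ℝ) (ht : 0 ≤ t) :
    2 * ∫ w in (0:ℝ)..t, ∫ v in (0:ℝ)..w, Real.exp (-(v ^ 2 + w ^ 2) / 2) * v
      = (Real.sqrt 2 - 1) * Real.sqrt π - 2 * Real.sqrt (2 * π) * Ψ t
        + 2 * Real.sqrt π * Ψ (Real.sqrt 2 * t) := by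
  have hsqrt2 : (0 : ℝ) < √2 := by positivity
  have hgauss : ∀ x, 0 ≤ x →
      ∫ y in (0 : ℝ)..x, exp (-y ^ 2 / 2) = √(2 * π) * (1 / 2 - Ψ x) := by
    intro x hx
    have hsqrt2pi : 0 < √(2 * π) := by positivity
    rw [integral_exp_neg_sq_div_two_eq_sub_integral_Ioi hx, hΨ, integral_const_mul]
    field_simp
  have hinner : ∀ w : ℝ, ∫ v in (0 : ℝ)..w, exp (-(v ^ 2 + w ^ 2) / 2) * v
      = exp (-w ^ 2 / 2) - exp (-(√2 * w) ^ 2 / 2) := fun w ↦ by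
    rw [integral_exp_neg_sq_add_div_two_mul_self, mul_pow, sq_sqrt zero_le_two]
    ring_nf
  have hscaled : ∫ w in (0 : ℝ)..t, exp (-(√2 * w) ^ 2 / 2)
      = (√2)⁻¹ * (√(2 * π) * (1 / 2 - Ψ (√2 * t))) := by
    rw [intervalIntegral.integral_comp_mul_left (fun y ↦ exp (-y ^ 2 / 2)) hsqrt2.ne', mul_zero,
      hgauss _ (by positivity), smul_eq_mul]
  simp_rw [hinner]
  rw [intervalIntegral.integral_sub (by apply Continuous.intervalIntegrable; fun_prop)
    (by apply Continuous.intervalIntegrable; fun_prop), hgauss t ht, hscaled, sqrt_mul zero_le_two]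
  field_simp
  ring
end

section
/- Let Ψ be the standard normal survival function, σ : [0,T] → (0,∞) and δ̃ : [0,T] → ℝ continuous and differentiable at T with σ'(T) > 0, c ≥ 0, x > 0, T_u = T − x u^{-2}, g_u(t) = (u + c δ̃(t))/σ(t). Then lim_{u→∞} Ψ(g_u(T_u))/Ψ(g_u(T)) = exp(−(σ'(T)/σ(T)³) x). -/
/-!
By Mills' ratio, `∫_v^∞ e^{-y²/2} dy ~ e^{-v²/2}/v` as `v → ∞`, so for `v, w → ∞` with
`v² - w²` convergent the ratio of the two Gaussian tails behaves like
`(w/v) · exp((w² - v²)/2)`, and `w/v → 1`. With `v = g_u(T_u)` and `w = g_u(T)`, expanding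
`g_u(t)² = u²/σ(t)² + 2cu·δ̃(t)/σ(t)² + c²·δ̃(t)²/σ(t)²` and differentiating each coefficient at
`T` against the increment `T_u - T = -x/u²` gives `v² - w² → 2σ'(T)x/σ(T)³`.
-/

open Real Filter Topology Asymptotics MeasureTheory Set

theorem HasDerivAt.tendsto_mul_sub_of_tendsto_mul {α : Type*} {l : Filter α} {f : ℝ → ℝ}
    {f' a L : ℝ} {h k : α → ℝ} (hf : HasDerivAt f f' a) (hh : Tendsto h l (𝓝 0))
    (hkh : Tendsto (fun n => k n * h n) l (𝓝 L)) :
    Tendsto (fun n => k n * (f (a + h n) - f a)) l (𝓝 (f' * L)) := by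
  have hrem : Tendsto (fun n => k n * (f (a + h n) - f a - h n * f')) l (𝓝 0) := by
    have ho := (isBigO_refl k l).mul_isLittleO
      ((hasDerivAt_iff_isLittleO_nhds_zero.1 hf).comp_tendsto hh)
    exact (isLittleO_one_iff ℝ).1 (ho.trans_isBigO (hkh.isBigO_one ℝ))
  have := hrem.add (hkh.const_mul f')
  rw [zero_add] at this
  exact this.congr fun n => by ring

noncomputable def gaussTail (v : ℝ) : ℝ := ∫ y in Ioi v, exp (-y ^ 2 / 2)

lemma integrable_exp_neg_sq_div_two : Integrable fun y : ℝ => exp (-y ^ 2 / 2) := by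
  simpa [div_eq_inv_mul] using integrable_exp_neg_mul_sq (by norm_num : (0 : ℝ) < 2⁻¹)

lemma hasDerivAt_neg_exp_neg_sq_div_two (y : ℝ) :
    HasDerivAt (fun y => -exp (-y ^ 2 / 2)) (y * exp (-y ^ 2 / 2)) y := by
  refine (((hasDerivAt_pow 2 y).fun_neg.div_const 2).exp).fun_neg.congr_deriv ?_
  push_cast
  ring

lemma tendsto_exp_neg_sq_div_two : Tendsto (fun y : ℝ => exp (-y ^ 2 / 2)) atTop (𝓝 0) :=
  tendsto_exp_atBot.comp <|
    (tendsto_neg_atBot_iff.2 (tendsto_pow_atTop two_ne_zero)).atBot_div_const two_pos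

lemma gaussTail_le_exp_neg_sq_div_two_div {v : ℝ} (hv : 0 < v) :
    gaussTail v ≤ exp (-v ^ 2 / 2) / v := by
  have hderiv (y) (_ : y ∈ Ici v) := hasDerivAt_neg_exp_neg_sq_div_two y
  have hnonneg (y) (hy : y ∈ Ioi v) : 0 ≤ y * exp (-y ^ 2 / 2) := by
    have : 0 < y := hv.trans hy
    positivity
  have hlim : Tendsto (fun y : ℝ => -exp (-y ^ 2 / 2)) atTop (𝓝 0) := by
    simpa using tendsto_exp_neg_sq_div_two.neg
  have hint := integrableOn_Ioi_deriv_of_nonneg' hderiv hnonneg hlim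
  calc gaussTail v ≤ ∫ y in Ioi v, y * exp (-y ^ 2 / 2) / v := by
        refine setIntegral_mono_on integrable_exp_neg_sq_div_two.integrableOn
          (hint.div_const v) measurableSet_Ioi fun y (hy : v < y) => ?_
        rw [le_div_iff₀ hv, mul_comm]
        exact mul_le_mul_of_nonneg_right hy.le (exp_pos _).le
    _ = exp (-v ^ 2 / 2) / v := by
        rw [integral_div, integral_Ioi_of_hasDerivAt_of_nonneg' hderiv hnonneg hlim]
        ring

lemma hasDerivAt_neg_exp_neg_sq_div_two_div {y : ℝ} (hy : y ≠ 0) :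
    HasDerivAt (fun y => -exp (-y ^ 2 / 2) / y) ((1 + (y ^ 2)⁻¹) * exp (-y ^ 2 / 2)) y := by
  refine ((hasDerivAt_neg_exp_neg_sq_div_two y).fun_div (hasDerivAt_id' y) hy).congr_deriv ?_
  field_simp
  ring

lemma exp_neg_sq_div_two_div_le_mul_gaussTail {v : ℝ} (hv : 0 < v) :
    exp (-v ^ 2 / 2) / v ≤ (1 + (v ^ 2)⁻¹) * gaussTail v := by
  have hderiv (y) (hy : y ∈ Ici v) :=
    hasDerivAt_neg_exp_neg_sq_div_two_div (hv.trans_le hy).ne'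
  have hnonneg (y) (_ : y ∈ Ioi v) : 0 ≤ (1 + (y ^ 2)⁻¹) * exp (-y ^ 2 / 2) := by positivity
  have hlim : Tendsto (fun y : ℝ => -exp (-y ^ 2 / 2) / y) atTop (𝓝 0) := by
    simpa [div_eq_mul_inv] using tendsto_exp_neg_sq_div_two.neg.mul tendsto_inv_atTop_zero
  calc exp (-v ^ 2 / 2) / v = ∫ y in Ioi v, (1 + (y ^ 2)⁻¹) * exp (-y ^ 2 / 2) := by
        rw [integral_Ioi_of_hasDerivAt_of_nonneg' hderiv hnonneg hlim]
        ring
    _ ≤ ∫ y in Ioi v, (1 + (v ^ 2)⁻¹) * exp (-y ^ 2 / 2) := by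
        refine setIntegral_mono_on (integrableOn_Ioi_deriv_of_nonneg' hderiv hnonneg hlim)
          (integrable_exp_neg_sq_div_two.integrableOn.const_mul _) measurableSet_Ioi
          fun y (hy : v < y) => ?_
        gcongr
    _ = (1 + (v ^ 2)⁻¹) * gaussTail v := integral_const_mul _ _

theorem gaussTail_isEquivalent :
    gaussTail ~[atTop] fun v => exp (-v ^ 2 / 2) / v := by
  refine isEquivalent_of_tendsto_one ?_
  have hlo : Tendsto (fun v : ℝ => (1 + (v ^ 2)⁻¹)⁻¹) atTop (𝓝 1) := by
    simpa using ((tendsto_pow_atTop (α := ℝ) two_ne_zero).inv_tendsto_atTop.const_add 1).inv₀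
      (by norm_num)
  refine tendsto_of_tendsto_of_tendsto_of_le_of_le' hlo tendsto_const_nhds ?_ ?_ <;>
    filter_upwards [eventually_gt_atTop 0] with v hv <;>
    have hpos : 0 < exp (-v ^ 2 / 2) / v := by positivity
  · rw [Pi.div_apply, inv_le_iff_one_le_mul₀' (by positivity), mul_div_assoc', le_div_iff₀ hpos,
      one_mul]
    exact exp_neg_sq_div_two_div_le_mul_gaussTail hv
  · rw [Pi.div_apply, div_le_one hpos]
    exact gaussTail_le_exp_neg_sq_div_two_div hv

lemma tendsto_div_of_tendsto_sq_sub_sq {α : Type*} {l : Filter α} {v w : α → ℝ} {c : ℝ}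
    (hv : Tendsto v l atTop) (hw : Tendsto w l atTop)
    (hvw : Tendsto (fun n => v n ^ 2 - w n ^ 2) l (𝓝 c)) :
    Tendsto (fun n => w n / v n) l (𝓝 1) := by
  have hprod : Tendsto (fun n => ((w n + v n) * v n)⁻¹) l (𝓝 0) :=
    ((hw.atTop_add_atTop hv).atTop_mul_atTop₀ hv).inv_tendsto_atTop
  have := (hvw.neg.mul hprod).const_add 1
  rw [mul_zero, add_zero] at this
  refine this.congr' ?_
  filter_upwards [hv.eventually_gt_atTop 0, hw.eventually_gt_atTop 0] with n hvn hwn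
  field_simp
  ring

theorem tendsto_gaussTail_div_gaussTail {α : Type*} {l : Filter α} {v w : α → ℝ} {b : ℝ}
    (hv : Tendsto v l atTop) (hw : Tendsto w l atTop)
    (hvw : Tendsto (fun n => v n ^ 2 - w n ^ 2) l (𝓝 (2 * b))) :
    Tendsto (fun n => gaussTail (v n) / gaussTail (w n)) l (𝓝 (exp (-b))) := by
  refine ((gaussTail_isEquivalent.comp_tendsto hv).div
    (gaussTail_isEquivalent.comp_tendsto hw)).symm.tendsto_nhds ?_
  have hexp : Tendsto (fun n => exp (-((v n ^ 2 - w n ^ 2) / 2))) l (𝓝 (exp (-b))) := by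
    refine (continuous_exp.tendsto _).comp ?_
    simpa using (hvw.div_const 2).neg
  have := (tendsto_div_of_tendsto_sq_sub_sq hv hw hvw).mul hexp
  rw [one_mul] at this
  refine this.congr fun n => ?_
  simp only [Pi.div_apply, Function.comp_apply, div_eq_mul_inv, mul_inv, inv_inv, ← exp_neg]
  rw [mul_mul_mul_comm, ← exp_add]
  ring_nf

lemma tendsto_add_mul_div_atTop {σ δ t : ℝ → ℝ} {T c : ℝ} (hσT : 0 < σ T)
    (hσ : ContinuousAt σ T) (hδ : ContinuousAt δ T) (ht : Tendsto t atTop (𝓝 T)) :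
    Tendsto (fun u => (u + c * δ (t u)) / σ (t u)) atTop atTop := by
  simpa only [div_eq_mul_inv, Function.comp_apply, id] using
    (tendsto_id.atTop_add ((hδ.tendsto.comp ht).const_mul c)).atTop_mul_pos
      (inv_pos.2 hσT) ((hσ.tendsto.comp ht).inv₀ hσT.ne')

theorem tendsto_sq_sub_sq {σ δ : ℝ → ℝ} {T x c σ' : ℝ} (hσ : HasDerivAt σ σ' T) (hσT : σ T ≠ 0)
    (hδ : DifferentiableAt ℝ δ T) :
    Tendsto (fun u => ((u + c * δ (T - x / u ^ 2)) / σ (T - x / u ^ 2)) ^ 2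
      - ((u + c * δ T) / σ T) ^ 2) atTop (𝓝 (2 * (σ' / σ T ^ 3 * x))) := by
  have hh : Tendsto (fun u : ℝ => -(x / u ^ 2)) atTop (𝓝 0) := by
    simpa using (tendsto_const_nhds.div_atTop (tendsto_pow_atTop (α := ℝ) two_ne_zero)).neg
  have hp : HasDerivAt (fun t => (σ t ^ 2)⁻¹) _ T := (hσ.pow 2).inv (pow_ne_zero 2 hσT)
  have hq : HasDerivAt (fun t => δ t * (σ t ^ 2)⁻¹) _ T := hδ.hasDerivAt.mul hp
  have hr : HasDerivAt (fun t => δ t ^ 2 * (σ t ^ 2)⁻¹) _ T := (hδ.hasDerivAt.pow 2).mul hp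
  have h1 := hp.tendsto_mul_sub_of_tendsto_mul hh (k := fun u => u ^ 2) (L := -x) <|
    tendsto_const_nhds.congr' <| by
      filter_upwards [eventually_ne_atTop 0] with u hu
      field_simp
  have h2 := hq.tendsto_mul_sub_of_tendsto_mul hh (k := fun u => 2 * c * u) (L := 0) <| by
    rw [← mul_zero (-(2 * c * x))]
    refine (tendsto_inv_atTop_zero.const_mul _).congr' ?_
    filter_upwards [eventually_ne_atTop 0] with u hu
    field_simp
  have h3 := hr.tendsto_mul_sub_of_tendsto_mul hh (k := fun _ => c ^ 2) (L := 0) <| by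
    simpa using hh.const_mul (c ^ 2)
  convert (h1.add h2).add h3 using 1
  · ext u
    simp only [← sub_eq_add_neg]
    ring
  · congr 1
    simp only [Pi.pow_apply]
    field_simp
    ring

theorem psi_ratio_limit_general
    (Ψ : ℝ → ℝ)
    (hΨ : ∀ x, Ψ x = ∫ y in Set.Ioi x, (1 / Real.sqrt (2 * π)) * Real.exp (-y ^ 2 / 2))
    (T x c σT' : ℝ) (σ δt : ℝ → ℝ)
    (hT : 0 < T)
    (hσpos : ∀ t ∈ Set.Icc (0:ℝ) T, 0 < σ t)
    (hσd : HasDerivAt σ σT' T)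
    (hδd : DifferentiableAt ℝ δt T) :
    Tendsto (fun u : ℝ =>
        Ψ ((u + c * δt (T - x / u ^ 2)) / σ (T - x / u ^ 2))
          / Ψ ((u + c * δt T) / σ T))
      atTop (nhds (Real.exp (-(σT' / σ T ^ 3) * x))) := by
  have hσT : 0 < σ T := hσpos T ⟨hT.le, le_rfl⟩
  have hΨ_eq (v : ℝ) : Ψ v = 1 / √(2 * π) * gaussTail v := by
    rw [hΨ, gaussTail, integral_const_mul]
  have hTu : Tendsto (fun u : ℝ => T - x / u ^ 2) atTop (𝓝 T) := by
    simpa using tendsto_const_nhds.sub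
      (tendsto_const_nhds.div_atTop (tendsto_pow_atTop (α := ℝ) two_ne_zero))
  have hv := tendsto_add_mul_div_atTop (c := c) hσT hσd.continuousAt hδd.continuousAt hTu
  have hw := tendsto_add_mul_div_atTop (c := c) hσT hσd.continuousAt hδd.continuousAt
    (tendsto_const_nhds (x := T))
  rw [neg_mul]
  refine (tendsto_gaussTail_div_gaussTail hv hw (tendsto_sq_sub_sq hσd hσT.ne' hδd)).congr
    fun u => ?_
  rw [hΨ_eq, hΨ_eq, mul_div_mul_left _ _ (by positivity)]

/-- Exponential limit of the ratio of survival-function values (Theorem 2):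
with `T_u = T - x u⁻²` and `g_u(t) = (u + c δ̃(t))/σ(t)`,
`Ψ(g_u(T_u))/Ψ(g_u(T)) → exp(-(σ'(T)/σ(T)³) x)` as `u → ∞`. -/
theorem psi_ratio_limit
    (Ψ : ℝ → ℝ)
    (hΨ : ∀ x, Ψ x = ∫ y in Set.Ioi x, (1 / Real.sqrt (2 * π)) * Real.exp (-y ^ 2 / 2))
    (T x c σT' : ℝ) (σ δt : ℝ → ℝ)
    (hT : 0 < T) (hx : 0 < x) (hc : 0 ≤ c)
    (hσpos : ∀ t ∈ Set.Icc (0:ℝ) T, 0 < σ t)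
    (hσcont : ContinuousOn σ (Set.Icc 0 T))
    (hσd : HasDerivAt σ σT' T) (hσT' : 0 < σT')
    (hδcont : ContinuousOn δt (Set.Icc 0 T))
    (hδd : DifferentiableAt ℝ δt T) :
    Tendsto (fun u : ℝ =>
        Ψ ((u + c * δt (T - x / u ^ 2)) / σ (T - x / u ^ 2))
          / Ψ ((u + c * δt T) / σ T))
      atTop (nhds (Real.exp (-(σT' / σ T ^ 3) * x))) :=
  psi_ratio_limit_general Ψ hΨ T x c σT' σ δt hT hσpos hσd hδd
end
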